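/- arXiv:2208.03503 — 6 statements merged into one kernel-verified Lean document; each statement's English description precedes it below -/
import Mathlib

section
/- Let f be a normalized 2-cocycle on V₄ with values in ℂˣ and let h be a multiplicative Lie partner of f with respect to the multiplicative Lie algebra structure ⋆ on V₄ determined by a⋆b = a. Then h(a,b) = h(b,a) = h(a,ab) = h(ab,a) = h(b,ab) = h(ab,b) and h(a,b)²·f(a,a) = 1. -/
/-- The Klein four group, written multiplicatively. -/
abbrev V4 : Type := Multiplicative (ZMod 2 × ZMod 2)

/-- The generator `a` of `V₄`. -/
def V4.a : V4 := Multiplicative.ofAdd ((1 : ZMod 2), (0 : ZMod 2))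

/-- The generator `b` of `V₄`. -/
def V4.b : V4 := Multiplicative.ofAdd ((0 : ZMod 2), (1 : ZMod 2))

/-- The multiplicative Lie algebra structure on `V₄` determined by `a ⋆ b = a`:
explicitly `x ⋆ y = a` if `x ≠ 1`, `y ≠ 1` and `x ≠ y`, and `x ⋆ y = 1` otherwise. -/
def V4.star (x y : V4) : V4 :=
  if x ≠ 1 ∧ y ≠ 1 ∧ x ≠ y then V4.a else 1

/-- A normalized 2-cocycle on a group `K` with values in `ℂˣ` (trivial action). -/
def IsNormalizedCocycle {K : Type*} [Group K] (f : K → K → ℂˣ) : Prop :=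
  (∀ x y z : K, f x y * f (x * y) z = f y z * f x (y * z)) ∧
  (∀ x : K, f x 1 = 1 ∧ f 1 x = 1)

/-- `h` is a multiplicative Lie partner of the 2-cocycle `f` with respect to the
multiplicative Lie algebra structure `star` on `K`. -/
def IsMulLiePartner {K : Type*} [Group K] (star : K → K → K)
    (f h : K → K → ℂˣ) : Prop :=
  (∀ x : K, h x 1 = 1 ∧ h 1 x = 1 ∧ h x x = 1) ∧
  (∀ x y z : K, h x (y * z) =
    h x y * h x z * (f y⁻¹ y)⁻¹ * f y (star x z) * f (y * star x z) y⁻¹ *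
      f (star x y) (y * star x z * y⁻¹)) ∧
  (∀ x y z : K, h (x * y) z =
    h y z * h x z * (f x⁻¹ x)⁻¹ * f x (star y z) * f (x * star y z) x⁻¹ *
      f (x * star y z * x⁻¹) (star x z)) ∧
  (∀ x y z : K,
    h (star y x) (x * z * x⁻¹) * h (star x z) (z * y * z⁻¹) * h (star z y) (y * x * y⁻¹) *
      f (star (star y x) (x * z * x⁻¹)) (star (star x z) (z * y * z⁻¹)) *
      f (star (star y x) (x * z * x⁻¹) * star (star x z) (z * y * z⁻¹))
        (star (star z y) (y * x * y⁻¹)) = 1) ∧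
  (∀ x y z : K, h (z * x * z⁻¹) (z * y * z⁻¹) =
    h x y * f z (star x y) * (f z⁻¹ z)⁻¹ * f (z * star x y) z⁻¹)

theorem kleinFour_partner_values (f h : V4 → V4 → ℂˣ)
    (hf : IsNormalizedCocycle f) (hh : IsMulLiePartner V4.star f h) :
    (h V4.a V4.b = h V4.b V4.a ∧
     h V4.a V4.b = h V4.a (V4.a * V4.b) ∧
     h V4.a V4.b = h (V4.a * V4.b) V4.a ∧
     h V4.a V4.b = h V4.b (V4.a * V4.b) ∧
     h V4.a V4.b = h (V4.a * V4.b) V4.b) ∧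
    h V4.a V4.b ^ 2 * f V4.a V4.a = 1 := by
  obtain ⟨hcoc, hnorm⟩ := hf
  obtain ⟨hunit, h2, h3, _h4, h5⟩ := hh
  have hinv : ∀ x : V4, x⁻¹ = x := by decide
  have hconj : ∀ u v : V4, u * v * u⁻¹ = v := by decide
  have hsq : ∀ x : V4, x * x = 1 := by decide
  have hstar01 : ∀ x z : V4, V4.star x z = 1 ∨ V4.star x z = V4.a := by decide
  have sab : V4.star V4.a V4.b = V4.a := by decide
  have sba : V4.star V4.b V4.a = V4.a := by decide
  have saa : V4.star V4.a V4.a = 1 := by decide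
  have sbb : V4.star V4.b V4.b = 1 := by decide
  have saab : V4.star V4.a (V4.a * V4.b) = V4.a := by decide
  have sbab : V4.star V4.b (V4.a * V4.b) = V4.a := by decide
  have saba : V4.star (V4.a * V4.b) V4.a = V4.a := by decide
  have sabb : V4.star (V4.a * V4.b) V4.b = V4.a := by decide
  -- Key relation from axiom (5) with x = a, y = b
  have hA : ∀ y : V4, f y V4.a * (f y⁻¹ y)⁻¹ * f (y * V4.a) y⁻¹ = 1 := by
    intro y
    have e := h5 V4.a V4.b y
    rw [hconj, hconj, sab] at e
    have : h V4.a V4.b * 1 =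
        h V4.a V4.b * (f y V4.a * (f y⁻¹ y)⁻¹ * f (y * V4.a) y⁻¹) := by
      rw [mul_one]
      calc h V4.a V4.b = h V4.a V4.b * f y V4.a * (f y⁻¹ y)⁻¹ * f (y * V4.a) y⁻¹ := e
        _ = h V4.a V4.b * (f y V4.a * (f y⁻¹ y)⁻¹ * f (y * V4.a) y⁻¹) := by ac_rfl
    exact (mul_left_cancel this).symm
  -- Simplified biadditivity in second argument
  have hB : ∀ x y z : V4,
      h x (y * z) = h x y * h x z * f (V4.star x y) (V4.star x z) := by
    intro x y z
    have e := h2 x y z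
    rcases hstar01 x z with hs | hs <;> rw [hs] at e ⊢
    · simp only [mul_one, hinv, hsq, (hnorm _).1] at e
      rw [(hnorm _).1, mul_one, e]
      calc h x y * h x z * (f y y)⁻¹ * f y y
          = h x y * h x z * ((f y y)⁻¹ * f y y) := by ac_rfl
        _ = h x y * h x z := by rw [inv_mul_cancel, mul_one]
    · rw [hconj] at e
      rw [e]
      calc h x y * h x z * (f y⁻¹ y)⁻¹ * f y V4.a * f (y * V4.a) y⁻¹ *
            f (V4.star x y) V4.a
          = (f y V4.a * (f y⁻¹ y)⁻¹ * f (y * V4.a) y⁻¹) *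
            (h x y * h x z * f (V4.star x y) V4.a) := by ac_rfl
        _ = h x y * h x z * f (V4.star x y) V4.a := by rw [hA, one_mul]
  -- Simplified biadditivity in first argument
  have hC : ∀ x y z : V4,
      h (x * y) z = h y z * h x z * f (V4.star y z) (V4.star x z) := by
    intro x y z
    have e := h3 x y z
    rcases hstar01 y z with hs | hs <;> rw [hs] at e ⊢
    · simp only [mul_one, hinv, hsq, (hnorm _).1, (hnorm _).2] at e
      rw [(hnorm _).2, mul_one, e]
      calc h y z * h x z * (f x x)⁻¹ * f x x
          = h y z * h x z * ((f x x)⁻¹ * f x x) := by ac_rfl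
        _ = h y z * h x z := by rw [inv_mul_cancel, mul_one]
    · rw [hconj] at e
      rw [e]
      calc h y z * h x z * (f x⁻¹ x)⁻¹ * f x V4.a * f (x * V4.a) x⁻¹ *
            f V4.a (V4.star x z)
          = (f x V4.a * (f x⁻¹ x)⁻¹ * f (x * V4.a) x⁻¹) *
            (h y z * h x z * f V4.a (V4.star x z)) := by ac_rfl
        _ = h y z * h x z * f V4.a (V4.star x z) := by rw [hA, one_mul]
  -- the individual equalities
  have e1 : h V4.a (V4.a * V4.b) = h V4.a V4.b := by
    rw [hB, (hunit V4.a).2.2, saa, (hnorm _).2, one_mul, mul_one]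
  have e2 : h V4.b (V4.a * V4.b) = h V4.b V4.a := by
    rw [hB, (hunit V4.b).2.2, sbb, sba, (hnorm _).1, mul_one, mul_one]
  have e3 : h (V4.a * V4.b) V4.a = h V4.b V4.a := by
    rw [hC, (hunit V4.a).2.2, saa, sba, (hnorm _).1, mul_one, mul_one]
  have e4 : h (V4.a * V4.b) V4.b = h V4.a V4.b := by
    rw [hC, (hunit V4.b).2.2, sbb, sab, (hnorm _).2, one_mul, mul_one]
  -- h a b ^ 2 * f a a = 1
  have e5 : h V4.a V4.b * h V4.a V4.b * f V4.a V4.a = 1 := by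
    have hbab : V4.b * (V4.a * V4.b) = V4.a := by decide
    have e := hB V4.a V4.b (V4.a * V4.b)
    rw [hbab, sab, saab, (hunit V4.a).2.2, e1] at e
    exact e.symm
  have e6 : h V4.b V4.a * h V4.a V4.b * f V4.a V4.a = 1 := by
    have e := hB (V4.a * V4.b) V4.a V4.b
    rw [(hunit (V4.a * V4.b)).2.2, saba, sabb] at e
    have e' : h (V4.a * V4.b) V4.a * h (V4.a * V4.b) V4.b * f V4.a V4.a = 1 := e.symm
    rw [e3, e4] at e'
    exact e'
  have hsym : h V4.a V4.b = h V4.b V4.a := by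
    have : h V4.a V4.b * (h V4.a V4.b * f V4.a V4.a) =
        h V4.b V4.a * (h V4.a V4.b * f V4.a V4.a) := by
      rw [← mul_assoc, ← mul_assoc, e5, e6]
    exact mul_right_cancel this
  refine ⟨⟨hsym, e1.symm, hsym.trans e3.symm, hsym.trans e2.symm, e4.symm⟩, ?_⟩
  rw [pow_two]
  exact e5
end

section
/- Let n ≥ 1, let i be an integer, and let ⋆ be a multiplicative Lie algebra structure on the dihedral group Dₙ satisfying a⋆b = bⁱ. Then for all x, y, z ∈ Dₙ one has [x⋆y, ʸz]·[y⋆z, ᶻx]·[z⋆x, ˣy] = 1, where ˣy = xyx⁻¹ and [g,h] = g·h·g⁻¹·h⁻¹. -/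
/-- A multiplicative Lie algebra structure on a group `K` is a map `⋆ : K × K → K`
satisfying the five axioms below (writing `ˣy` for `x * y * x⁻¹`). -/
def IsMulLieStructure {K : Type*} [Group K] (star : K → K → K) : Prop :=
  (∀ x : K, star x x = 1) ∧
  (∀ x y z : K, star x (y * z) = star x y * (y * star x z * y⁻¹)) ∧
  (∀ x y z : K, star (x * y) z = (x * star y z * x⁻¹) * star x z) ∧
  (∀ x y z : K,
    star (star x y) (y * z * y⁻¹) * star (star y z) (z * x * z⁻¹) *
      star (star z x) (x * y * x⁻¹) = 1) ∧
  (∀ x y z : K, z * star x y * z⁻¹ = star (z * x * z⁻¹) (z * y * z⁻¹))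

/-- The reflection `a = sr 0` of the dihedral group `Dₙ`. -/
def Da (n : ℕ) : DihedralGroup n := DihedralGroup.sr 0

/-- The rotation `b = r 1` of the dihedral group `Dₙ`. -/
def Db (n : ℕ) : DihedralGroup n := DihedralGroup.r 1

/-!
Writing every element of `Dₙ` as `x = bᵖ · a^ε` (`ε ∈ {0, 1}`), the axioms (ii) and (iii)
determine `⋆` from its value on the generators: `x ⋆ y = b^(i (εₓ p_y - ε_y pₓ))`. So `⋆`
takes values in the abelian rotation subgroup, and a rotation `bᵐ` has commutator
`b^(2 m ε_g)` with `g`, which depends only on the conjugacy-invariant `ε_g`. The Jacobi-type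
product is therefore `b^(2 i S)` with `S` an alternating cyclic sum in the `εₓ, pₓ`, which
vanishes identically.
-/

open scoped commutatorElement

namespace IsMulLieStructure

variable {K : Type*} [Group K] {star : K → K → K}

theorem star_self (h : IsMulLieStructure star) (x : K) : star x x = 1 := h.1 x

theorem star_mul_right (h : IsMulLieStructure star) (x y z : K) :
    star x (y * z) = star x y * (y * star x z * y⁻¹) := h.2.1 x y z

theorem star_mul_left (h : IsMulLieStructure star) (x y z : K) :
    star (x * y) z = x * star y z * x⁻¹ * star x z := h.2.2.1 x y z

theorem star_one_right (h : IsMulLieStructure star) (x : K) : star x 1 = 1 := by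
  have h₁ := h.star_mul_right x 1 1
  simp only [mul_one, one_mul, inv_one] at h₁
  exact left_eq_mul.mp h₁

theorem star_swap (h : IsMulLieStructure star) (x y : K) : star y x = (star x y)⁻¹ := by
  have hyx : star y (x * y) = star y x := by rw [h.star_mul_right, h.star_self]; group
  have hxx : star x (x * y) = x * star x y * x⁻¹ := by
    rw [h.star_mul_right, h.star_self, one_mul]
  have hconj : x * (star y x * star x y) * x⁻¹ = 1 := by
    rw [← h.star_self (x * y), h.star_mul_left, hyx, hxx]; group
  exact eq_inv_of_mul_eq_one_left (conj_eq_one_iff.mp hconj)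

theorem star_zpow_right (h : IsMulLieStructure star) {x y : K} (hc : Commute y (star x y))
    (m : ℤ) : star x (y ^ m) = star x y ^ m := by
  have hconj (k : ℤ) : y ^ k * star x y * (y ^ k)⁻¹ = star x y := by
    rw [(hc.zpow_left k).eq, mul_inv_cancel_right]
  induction m using Int.induction_on with
  | zero => simp [h.star_one_right]
  | succ k ih => rw [zpow_add_one, h.star_mul_right, ih, hconj, zpow_add_one]
  | pred k ih =>
    have hstep := h.star_mul_right x (y ^ (-(k : ℤ) - 1)) y
    rw [← zpow_add_one, sub_add_cancel, ih, hconj] at hstep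
    rw [zpow_sub_one (star x y), hstep, mul_inv_cancel_right]

theorem star_zpow_left (h : IsMulLieStructure star) {x y : K} (hc : Commute x (star x y))
    (m : ℤ) : star (x ^ m) y = star x y ^ m := by
  rw [h.star_swap, h.star_zpow_right (by rw [h.star_swap]; exact hc.inv_right), h.star_swap,
    inv_zpow, inv_inv]

end IsMulLieStructure

namespace DihedralGroup

variable {n : ℕ} {i : ℤ} {star : DihedralGroup n → DihedralGroup n → DihedralGroup n}

theorem star_r_r (h : IsMulLieStructure star) (j k : ZMod n) : star (r j) (r k) = 1 := by
  obtain ⟨j, rfl⟩ := ZMod.intCast_surjective j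
  obtain ⟨k, rfl⟩ := ZMod.intCast_surjective k
  have hb : star (r 1) (r (k : ZMod n)) = 1 := by
    rw [← r_one_zpow, h.star_zpow_right (by rw [h.star_self]; exact .one_right _), h.star_self,
    one_zpow]
  rw [← r_one_zpow j, h.star_zpow_left (by rw [hb]; exact .one_right _), hb, one_zpow]

theorem star_sr_r (h : IsMulLieStructure star) (hab : star (sr 0) (r 1) = r i) (j k : ZMod n) :
    star (sr j) (r k) = r ((i : ZMod n) * k) := by
  obtain ⟨k, rfl⟩ := ZMod.intCast_surjective k
  have hb : Commute (r 1) (star (sr 0) (r 1)) := by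
    rw [hab, ← r_one_zpow]
    exact Commute.zpow_right rfl i
  rw [← zero_add j, ← sr_mul_r, h.star_mul_left, star_r_r h, mul_one, mul_inv_cancel, one_mul,
    ← r_one_zpow, h.star_zpow_right hb, hab, r_zpow]

theorem star_sr_sr (h : IsMulLieStructure star) (hab : star (sr 0) (r 1) = r i) (j k : ZMod n) :
    star (sr j) (sr k) = r ((i : ZMod n) * (j - k)) := by
  have hk : star (sr 0) (sr k) = r (-((i : ZMod n) * k)) := by
    rw [← zero_add k, ← sr_mul_r, h.star_mul_right, h.star_self, star_sr_r h hab, inv_sr,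
      sr_mul_r, sr_mul_sr]
    simp
  rw [← zero_add j, ← sr_mul_r, h.star_mul_left, h.star_swap (sr k), star_sr_r h hab, hk, inv_r,
    inv_sr, sr_mul_r, sr_mul_sr, r_mul_r]
  congr 1
  ring

/-- With `a = sr 0` and `b = r 1`, every element is `b ^ bExp x * a ^ aExp x`
(note `sr k = r (-k) * sr 0`). -/
def aExp : DihedralGroup n → ZMod n
  | r _ => 0
  | sr _ => 1

def bExp : DihedralGroup n → ZMod n
  | r k => k
  | sr k => -k

theorem star_eq_r (h : IsMulLieStructure star) (hab : star (sr 0) (r 1) = r i)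
    (x y : DihedralGroup n) :
    star x y = r ((i : ZMod n) * (aExp x * bExp y - aExp y * bExp x)) := by
  cases x <;> cases y <;>
    simp only [aExp, bExp, star_r_r h, star_sr_r h hab, star_sr_sr h hab, h.star_swap (sr _) (r _),
      inv_r, one_def] <;>
    congr 1 <;> ring

theorem commutatorElement_r_left (m : ZMod n) (g : DihedralGroup n) :
    ⁅r m, g⁆ = r (2 * m * aExp g) := by
  cases g <;> simp only [commutatorElement_def, aExp, r_mul_r, r_mul_sr, sr_mul_r, sr_mul_sr,
    inv_r, inv_sr] <;> congr 1 <;> ring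

theorem aExp_conj (y z : DihedralGroup n) : aExp (y * z * y⁻¹) = aExp z := by
  cases y <;> cases z <;> rfl

end DihedralGroup

open DihedralGroup in
theorem dihedral_J_trivial_general (n : ℕ) (i : ℤ)
    (star : DihedralGroup n → DihedralGroup n → DihedralGroup n)
    (hstar : IsMulLieStructure star)
    (hab : star (Da n) (Db n) = (Db n) ^ i) :
    ∀ x y z : DihedralGroup n,
      ⁅star x y, y * z * y⁻¹⁆ * ⁅star y z, z * x * z⁻¹⁆ * ⁅star z x, x * y * x⁻¹⁆ = 1 := by
  rw [Da, Db, r_one_zpow] at hab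
  intro x y z
  simp only [star_eq_r hstar hab, commutatorElement_r_left, aExp_conj, r_mul_r]
  rw [← r_zero]
  congr 1
  ring

theorem dihedral_J_trivial (n : ℕ) (hn : 1 ≤ n) (i : ℤ)
    (star : DihedralGroup n → DihedralGroup n → DihedralGroup n)
    (hstar : IsMulLieStructure star)
    (hab : star (Da n) (Db n) = (Db n) ^ i) :
    ∀ x y z : DihedralGroup n,
      ⁅star x y, y * z * y⁻¹⁆ * ⁅star y z, z * x * z⁻¹⁆ * ⁅star z x, x * y * x⁻¹⁆ = 1 :=
  dihedral_J_trivial_general n i star hstar hab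
end

section
/- Let n ≥ 1, let i be an integer, let ⋆ be a multiplicative Lie algebra structure on the dihedral group Dₙ satisfying a⋆b = bⁱ, let f be a normalized 2-cocycle on Dₙ with values in ℂˣ, and let h be a multiplicative Lie partner of f with respect to ⋆. Then for all integers j one has h(a, a·bʲ) = h(a, bʲ)·f(a,a)⁻¹·f(a, bʲⁱ)·f(a·bʲⁱ, a) and h(a·bʲ, a) = h(bʲ, a)·f(a,a)⁻¹·f(a, b⁻ʲⁱ)·f(a·b⁻ʲⁱ, a). -/
theorem dihedral_partner_reflection_values (n : ℕ) (hn : 1 ≤ n) (i : ℤ)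
    (star : DihedralGroup n → DihedralGroup n → DihedralGroup n)
    (hstar : IsMulLieStructure star)
    (hab : star (Da n) (Db n) = (Db n) ^ i)
    (f h : DihedralGroup n → DihedralGroup n → ℂˣ)
    (hf : IsNormalizedCocycle f)
    (hh : IsMulLiePartner star f h) :
    ∀ j : ℤ,
      h (Da n) (Da n * (Db n) ^ j) =
        h (Da n) ((Db n) ^ j) * (f (Da n) (Da n))⁻¹ * f (Da n) ((Db n) ^ (j * i)) *
          f (Da n * (Db n) ^ (j * i)) (Da n) ∧
      h (Da n * (Db n) ^ j) (Da n) =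
        h ((Db n) ^ j) (Da n) * (f (Da n) (Da n))⁻¹ * f (Da n) ((Db n) ^ (-(j * i))) *
          f (Da n * (Db n) ^ (-(j * i))) (Da n) := by

  obtain ⟨hs1, hs2, hs3, hs4, hs5⟩ := hstar
  obtain ⟨hf1, hf2⟩ := hf
  obtain ⟨hh1, hh2, hh3, hh4, hh5⟩ := hh
  set a := Da n with ha
  set b := Db n with hb
  have ainv : a⁻¹ = a := rfl
  -- star x 1 = 1
  have sone : ∀ x, star x 1 = 1 := by
    intro x
    have h0 := hs2 x 1 1
    simp only [one_mul, mul_one, inv_one] at h0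
    exact mul_left_cancel (h0.symm.trans (mul_one _).symm)
  -- antisymmetry
  have anti : ∀ x y, star y x = (star x y)⁻¹ := by
    intro x y
    have h0 := hs1 (x * y)
    rw [hs3 x y (x * y), hs2 y x y, hs2 x x y, hs1 x, hs1 y] at h0
    have h1 : x * (star y x * star x y) * x⁻¹ = 1 := by rw [← h0]; group
    have h2 : star y x * star x y = 1 := by
      have h3 : star y x * star x y = x⁻¹ * (x * (star y x * star x y) * x⁻¹) * x := by group
      rw [h3, h1]; group
    exact eq_inv_of_mul_eq_one_left h2
  -- star x y⁻¹
  have sinv : ∀ x y, star x y⁻¹ = y⁻¹ * (star x y)⁻¹ * y := by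
    intro x y
    have h0 := hs2 x y y⁻¹
    rw [mul_inv_cancel, sone] at h0
    have h1 : y * star x y⁻¹ * y⁻¹ = (star x y)⁻¹ :=
      eq_inv_of_mul_eq_one_right h0.symm
    calc star x y⁻¹ = y⁻¹ * (y * star x y⁻¹ * y⁻¹) * y := by group
      _ = y⁻¹ * (star x y)⁻¹ * y := by rw [h1]
  -- star a b^j = b^(j*i)
  have sabnat : ∀ k : ℕ, star a (b ^ (k : ℤ)) = b ^ ((k : ℤ) * i) := by
    intro k
    induction k with
    | zero => simpa using sone a
    | succ m ih =>
        push_cast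
        rw [zpow_add_one, hs2, ih, hab, ← zpow_neg, ← zpow_add, ← zpow_add, ← zpow_add]
        congr 1
        ring
  have sab : ∀ j : ℤ, star a (b ^ j) = b ^ (j * i) := by
    intro j
    obtain ⟨k, rfl | rfl⟩ := Int.eq_nat_or_neg j
    · exact sabnat k
    · rw [zpow_neg, sinv, sabnat, ← zpow_neg, ← zpow_neg, ← zpow_add, ← zpow_add]
      congr 1
      ring
  have sba : ∀ j : ℤ, star (b ^ j) a = b ^ (-(j * i)) := by
    intro j
    rw [anti a (b ^ j), sab, ← zpow_neg]
  intro j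
  constructor
  · rw [hh2 a a (b ^ j), sab, hs1 a, (hh1 a).2.2, ainv, (hf2 _).2]
    simp only [one_mul, mul_one]
  · rw [hh3 a (b ^ j) a, sba, hs1 a, (hh1 a).2.2, ainv, (hf2 _).1]
    simp only [one_mul, mul_one]
end

section
/- Let n ≥ 1, let i be an integer, let ⋆ be a multiplicative Lie algebra structure on the dihedral group Dₙ satisfying a⋆b = bⁱ, let f be a normalized 2-cocycle on Dₙ with values in ℂˣ, and let h be a multiplicative Lie partner of f with respect to ⋆. Then h(a, b⁻¹) = h(a, b)·f(a, bⁱ)·f(a, a)⁻¹·f(a·bⁱ, a). -/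
theorem dihedral_partner_h_a_b_inv (n : ℕ) (hn : 1 ≤ n) (i : ℤ)
    (star : DihedralGroup n → DihedralGroup n → DihedralGroup n)
    (hstar : IsMulLieStructure star)
    (hab : star (Da n) (Db n) = (Db n) ^ i)
    (f h : DihedralGroup n → DihedralGroup n → ℂˣ)
    (hf : IsNormalizedCocycle f)
    (hh : IsMulLiePartner star f h) :
    h (Da n) (Db n)⁻¹ =
      h (Da n) (Db n) * f (Da n) ((Db n) ^ i) * (f (Da n) (Da n))⁻¹ *
        f (Da n * (Db n) ^ i) (Da n) := by
  have haa : Da n * Da n = 1 := by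
    show DihedralGroup.sr 0 * DihedralGroup.sr 0 = 1
    rw [DihedralGroup.sr_mul_sr, sub_self, DihedralGroup.one_def]
  have hainv : (Da n)⁻¹ = Da n := inv_eq_of_mul_eq_one_right haa
  have hconj_a : Da n * Da n * (Da n)⁻¹ = Da n := by rw [haa, one_mul, hainv]
  have hconj_b : Da n * Db n * (Da n)⁻¹ = (Db n)⁻¹ := by
    rw [hainv]
    show DihedralGroup.sr 0 * DihedralGroup.r 1 * DihedralGroup.sr 0 = _
    rw [DihedralGroup.sr_mul_r, DihedralGroup.sr_mul_sr]
    refine eq_inv_of_mul_eq_one_left ?_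
    show DihedralGroup.r (0 - (0 + 1)) * DihedralGroup.r 1 = 1
    rw [DihedralGroup.r_mul_r]
    norm_num [← DihedralGroup.one_def]
  have := hh.2.2.2.2 (Da n) (Db n) (Da n)
  rw [hconj_a, hconj_b, hab, hainv] at this
  exact this
end

section
/- Let n ≥ 1, let i be an integer, let ⋆ be a multiplicative Lie algebra structure on the dihedral group Dₙ satisfying a⋆b = bⁱ, let f be a normalized 2-cocycle on Dₙ with values in ℂˣ, and let h be a multiplicative Lie partner of f with respect to ⋆. Set z = f(a, bⁱ)·f(a,a)⁻¹·f(a·bⁱ, a) and w = f(b⁻¹, b)⁻¹·f(b, b⁻ⁱ)·f(b¹⁻ⁱ, b⁻¹)·f(bⁱ, b⁻ⁱ). Then h(a,b)²·z·w = 1. -/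
theorem dihedral_partner_square (n : ℕ) (hn : 1 ≤ n) (i : ℤ)
    (star : DihedralGroup n → DihedralGroup n → DihedralGroup n)
    (hstar : IsMulLieStructure star)
    (hab : star (Da n) (Db n) = (Db n) ^ i)
    (f h : DihedralGroup n → DihedralGroup n → ℂˣ)
    (hf : IsNormalizedCocycle f)
    (hh : IsMulLiePartner star f h) :
    h (Da n) (Db n) ^ 2 *
      (f (Da n) ((Db n) ^ i) * (f (Da n) (Da n))⁻¹ * f (Da n * (Db n) ^ i) (Da n)) *
      ((f (Db n)⁻¹ (Db n))⁻¹ * f (Db n) ((Db n) ^ (-i)) * f ((Db n) ^ (1 - i)) (Db n)⁻¹ *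
        f ((Db n) ^ i) ((Db n) ^ (-i))) = 1 := by

  obtain ⟨hs1, hs2, hs3, hs4, hs5⟩ := hstar
  obtain ⟨hcoc, hnorm⟩ := hf
  obtain ⟨hh1, hh2, hh3, hh4, hh5⟩ := hh
  set a := Da n with ha
  set b := Db n with hb
  have ha2 : a * a = 1 := DihedralGroup.sr_mul_self 0
  have hainv : a⁻¹ = a := inv_eq_of_mul_eq_one_right ha2
  have hbinv : b⁻¹ = DihedralGroup.r (-1) := by
    apply inv_eq_of_mul_eq_one_right
    show DihedralGroup.r 1 * DihedralGroup.r (-1) = 1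
    rw [DihedralGroup.r_mul_r, add_neg_cancel, DihedralGroup.one_def]
  have hconj : a * b * a⁻¹ = b⁻¹ := by
    rw [hainv, hbinv]
    show DihedralGroup.sr 0 * DihedralGroup.r 1 * DihedralGroup.sr 0 = _
    rw [DihedralGroup.sr_mul_r, DihedralGroup.sr_mul_sr]
    norm_num
  have star1 : star a 1 = 1 := by
    have h0 := hs2 a 1 1
    simp only [mul_one, one_mul, inv_one] at h0
    exact (left_eq_mul.mp h0)
  have key : star a b⁻¹ = b ^ (-i) := by
    have h0 := hs2 a b b⁻¹
    rw [mul_inv_cancel, star1, hab] at h0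
    have h1 : b * star a b⁻¹ * b⁻¹ = (b ^ i)⁻¹ := (inv_eq_of_mul_eq_one_right h0.symm).symm
    have h2 : star a b⁻¹ = b⁻¹ * (b ^ i)⁻¹ * b := by
      rw [← h1]; group
    rw [h2]; group
  have E1 : h a b⁻¹ = h a b * f a (b ^ i) * (f a a)⁻¹ * f (a * b ^ i) a := by
    have h0 := hh5 a b a
    rw [mul_inv_cancel_right, hconj, hab, hainv] at h0
    exact h0
  have p1 : b * b ^ (-i) = b ^ (1 - i) := by group
  have p2 : b * b ^ (-i) * b⁻¹ = b ^ (-i) := by group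
  have E2 := hh2 a b b⁻¹
  rw [mul_inv_cancel, (hh1 a).1, key, hab, p2, p1, E1] at E2
  have hu := congrArg Units.val E2
  refine Units.ext ?_
  simp only [Units.val_mul, Units.val_pow_eq_pow_val, Units.val_inv_eq_inv_val, Units.val_one] at hu ⊢
  linear_combination -hu
end

section
/- Let K₁ and K₂ be finite abelian groups. Then the Schur multiplier of K₁ × K₂ satisfies M(K₁ × K₂) ≅ M(K₁) × M(K₂) × Hom(K₁, K₂), where M(K) denotes the second cohomology group H²(K, ℂˣ) with K acting trivially on ℂˣ. -/
/-!
Restriction to the two factors, followed by inflation back along the projections, splits off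
`H²(K₁)` and `H²(K₂)`. What remains is detected by the commutator pairing
`(a, b) ↦ f((a, 1), (1, b)) - f((1, b), (a, 1))` of a cocycle `f`: the commutator of lifts of
`(a, 1)` and `(1, b)` in the central extension classified by `f`. It is bimultiplicative, it
vanishes on coboundaries, and every bimultiplicative `β` is the pairing of the cocycle
`((a, b), (a', b')) ↦ β(a', b)⁻¹`. A cocycle `f` differs from the sum of its inflated
restrictions and the cocycle of its pairing by the coboundary of `g ↦ f((g₁, 1), (1, g₂))`.
Finally `Hom(K₂, ℂˣ) ≅ K₂` for a finite abelian group `K₂`.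
-/

/-- The Schur multiplier `M(K) = H²(K, ℂˣ)` of a group `K`: the second group cohomology
of `K` with coefficients in the trivial `K`-module `ℂˣ` (viewed additively as a
`ℤ`-module). -/
abbrev SchurMultiplier (K : Type) [Group K] : Type :=
  groupCohomology (Rep.trivial ℤ K (Additive ℂˣ)) 2

open CategoryTheory

theorem Prod.commute_mk_one_one_mk {M N : Type*} [MulOneClass M] [MulOneClass N] (m : M) (n : N) :
    Commute ((m, 1) : M × N) (1, n) :=
  .prod (.one_right m) (.one_left n)

namespace groupCohomology

section Cocycles

variable {k G : Type} [CommRing k] [Group G] {B : Rep k G} {N : Type} [AddCommGroup N]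

theorem cocycles₂_coe_add (f g : cocycles₂ B) : ⇑(f + g) = ⇑f + ⇑g := rfl

theorem H2π_surjective (B : Rep k G) : Function.Surjective (H2π B) :=
  (ModuleCat.epi_iff_surjective _).1 inferInstance

noncomputable def H2Lift (F : cocycles₂ B →+ N)
    (hF : ∀ x : cocycles₂ B, ⇑x ∈ coboundaries₂ B → F x = 0) : H2 B →+ N :=
  (H2π B).hom.toAddMonoidHom.liftOfSurjective (H2π_surjective B)
    ⟨F, fun x hx => hF x ((H2π_eq_zero_iff x).1 hx)⟩

theorem H2Lift_H2π (F : cocycles₂ B →+ N)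
    (hF : ∀ x : cocycles₂ B, ⇑x ∈ coboundaries₂ B → F x = 0) (x : cocycles₂ B) :
    H2Lift F hF (H2π B x) = F x :=
  AddMonoidHom.liftOfRightInverse_comp_apply _ _ _ _ x

end Cocycles

section TrivialCoefficients

variable {G H : Type} [Group G] [Group H] {A : Type} [AddCommGroup A]

theorem mem_cocycles₂_trivial_iff (f : G × G → A) :
    f ∈ cocycles₂ (Rep.trivial ℤ G A) ↔
      ∀ g h j : G, f (g * h, j) + f (g, h) = f (h, j) + f (g, h * j) :=
  mem_cocycles₂_iff (A := Rep.trivial ℤ G A) f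

theorem cocycles₂_trivial_mul (f : cocycles₂ (Rep.trivial ℤ G A)) (g h j : G) :
    f (g * h, j) + f (g, h) = f (h, j) + f (g, h * j) :=
  (mem_cocycles₂_trivial_iff f).1 f.2 g h j

theorem cocycles₂_trivial_apply_one_right (f : cocycles₂ (Rep.trivial ℤ G A)) (g : G) :
    f (g, 1) = f (1, g) :=
  (cocycles₂_map_one_snd f g).trans (cocycles₂_map_one_fst f g).symm

theorem const_mem_coboundaries₂ (c : A) :
    (fun _ => c : G × G → A) ∈ coboundaries₂ (Rep.trivial ℤ G A) :=
  ⟨fun _ => c, funext fun _ => by simp [d₁₂_hom_apply]⟩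

theorem cocycles₂_trivial_swap_of_mem_coboundaries₂ {f : cocycles₂ (Rep.trivial ℤ G A)}
    (hf : ⇑f ∈ coboundaries₂ (Rep.trivial ℤ G A)) {u v : G} (huv : Commute u v) :
    f (u, v) = f (v, u) := by
  obtain ⟨x, hx⟩ := hf
  rw [← hx]
  simp only [d₁₂_hom_apply, Representation.trivial_apply, huv.eq]
  abel

theorem cocycles₂_trivial_comm_mul_right (f : cocycles₂ (Rep.trivial ℤ G A)) {u v w : G}
    (hv : Commute u v) (hw : Commute u w) :
    f (u, v * w) - f (v * w, u) = (f (u, v) - f (v, u)) + (f (u, w) - f (w, u)) := by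
  have huvw := cocycles₂_trivial_mul f u v w
  have hvwu := cocycles₂_trivial_mul f v w u
  have hvuw := cocycles₂_trivial_mul f v u w
  rw [← hw.eq] at hvwu
  rw [← hv.eq] at hvuw
  linear_combination (norm := abel) hvuw - huvw - hvwu

def cocycles₂Comap (f : G →* H) (x : cocycles₂ (Rep.trivial ℤ H A)) :
    cocycles₂ (Rep.trivial ℤ G A) :=
  ⟨fun gh => x (f gh.1, f gh.2), (mem_cocycles₂_trivial_iff _).2 fun g h j => by
    simpa using cocycles₂_trivial_mul x (f g) (f h) (f j)⟩

theorem cocycles₂Comap_apply (f : G →* H) (x : cocycles₂ (Rep.trivial ℤ H A)) (g h : G) :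
    cocycles₂Comap f x (g, h) = x (f g, f h) := rfl

variable (A) in
noncomputable def H2TrivialMap (f : G →* H) :
    H2 (Rep.trivial ℤ H A) →+ H2 (Rep.trivial ℤ G A) :=
  (map f (𝟙 _) 2).hom.toAddMonoidHom

theorem H2TrivialMap_H2π (f : G →* H) (x : cocycles₂ (Rep.trivial ℤ H A)) :
    H2TrivialMap A f (H2π _ x) = H2π _ (cocycles₂Comap f x) :=
  H2π_comp_map_apply _ _ _

theorem H2TrivialMap_id (x : H2 (Rep.trivial ℤ G A)) :
    H2TrivialMap A (MonoidHom.id G) x = x := by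
  induction x using H2_induction_on with
  | h x => rw [H2TrivialMap_H2π]; rfl

theorem H2TrivialMap_comp {K : Type} [Group K] (f : G →* H) (g : K →* G)
    (x : H2 (Rep.trivial ℤ H A)) :
    H2TrivialMap A g (H2TrivialMap A f x) = H2TrivialMap A (f.comp g) x := by
  induction x using H2_induction_on with
  | h x => rw [H2TrivialMap_H2π, H2TrivialMap_H2π, H2TrivialMap_H2π]; rfl

theorem H2TrivialMap_one (x : H2 (Rep.trivial ℤ H A)) :
    H2TrivialMap A (1 : G →* H) x = 0 := by
  induction x using H2_induction_on with
  | h x =>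
    rw [H2TrivialMap_H2π, H2π_eq_zero_iff]
    exact const_mem_coboundaries₂ (x (1, 1))

end TrivialCoefficients

section ProductCocycles

variable {K₁ K₂ A : Type} [Group K₁] [Group K₂] [AddCommGroup A]

theorem cocycles₂_trivial_comm_mk_one_mul_right
    (f : cocycles₂ (Rep.trivial ℤ (K₁ × K₂) A)) (a : K₁) (b b' : K₂) :
    f ((a, 1), (1, b * b')) - f ((1, b * b'), (a, 1)) =
      (f ((a, 1), (1, b)) - f ((1, b), (a, 1))) +
        (f ((a, 1), (1, b')) - f ((1, b'), (a, 1))) := by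
  simpa using cocycles₂_trivial_comm_mul_right f (Prod.commute_mk_one_one_mk a b)
    (Prod.commute_mk_one_one_mk a b')

theorem cocycles₂_trivial_comm_mk_one_mul_left
    (f : cocycles₂ (Rep.trivial ℤ (K₁ × K₂) A)) (a a' : K₁) (b : K₂) :
    f ((a * a', 1), (1, b)) - f ((1, b), (a * a', 1)) =
      (f ((a, 1), (1, b)) - f ((1, b), (a, 1))) +
        (f ((a', 1), (1, b)) - f ((1, b), (a', 1))) := by
  have := cocycles₂_trivial_comm_mul_right f (Prod.commute_mk_one_one_mk a b).symm
    (Prod.commute_mk_one_one_mk a' b).symm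
  simp only [Prod.mk_mul_mk, mul_one] at this
  rw [← neg_sub, this]
  abel

theorem cocycles₂_trivial_prod_decomposition (f : cocycles₂ (Rep.trivial ℤ (K₁ × K₂) A))
    (a a' : K₁) (b b' : K₂) :
    f ((a', 1), (1, b')) - f ((a * a', 1), (1, b * b')) + f ((a, 1), (1, b)) =
      f ((a, 1), (a', 1)) + f ((1, b), (1, b')) -
        (f ((a', 1), (1, b)) - f ((1, b), (a', 1))) - f ((a, b), (a', b')) := by
  have C1 := cocycles₂_trivial_mul f (a, 1) (1, b) (a', b')
  have C2 := cocycles₂_trivial_mul f (a, 1) (a', 1) (1, b * b')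
  have C3 := cocycles₂_trivial_mul f (1, b) (a', 1) (1, b')
  have C4 := cocycles₂_trivial_mul f (a', 1) (1, b) (1, b')
  simp only [Prod.mk_mul_mk, mul_one, one_mul] at C1 C2 C3 C4
  linear_combination (norm := abel) C1 - C2 - C3 + C4

end ProductCocycles

section Pairing

variable {K₁ K₂ M : Type} [Group K₁] [Group K₂] [CommGroup M]

noncomputable def cocyclePairing (f : cocycles₂ (Rep.trivial ℤ (K₁ × K₂) (Additive M))) :
    K₁ →* K₂ →* M :=
  MonoidHom.mk'
    (fun a => MonoidHom.mk'
      (fun b => Additive.toMul (α := M) (f ((a, 1), (1, b)) - f ((1, b), (a, 1))))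
      fun b b' => by rw [cocycles₂_trivial_comm_mk_one_mul_right]; exact toMul_add _ _)
    fun a a' => by
      ext b
      change Additive.toMul (α := M) _ = _
      rw [cocycles₂_trivial_comm_mk_one_mul_left]
      exact toMul_add _ _

theorem cocyclePairing_apply (f : cocycles₂ (Rep.trivial ℤ (K₁ × K₂) (Additive M)))
    (a : K₁) (b : K₂) :
    cocyclePairing f a b = Additive.toMul (α := M) (f ((a, 1), (1, b)) - f ((1, b), (a, 1))) :=
  rfl

theorem cocyclePairing_add (f g : cocycles₂ (Rep.trivial ℤ (K₁ × K₂) (Additive M))) :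
    cocyclePairing (f + g) = cocyclePairing f * cocyclePairing g := by
  ext a b
  simp only [MonoidHom.mul_apply, cocyclePairing_apply]
  refine (congrArg Additive.toMul ?_).trans (toMul_add _ _)
  change f _ + g _ - (f _ + g _) = _
  abel

theorem cocyclePairing_eq_one_of_mem_coboundaries₂
    {f : cocycles₂ (Rep.trivial ℤ (K₁ × K₂) (Additive M))}
    (hf : ⇑f ∈ coboundaries₂ (Rep.trivial ℤ (K₁ × K₂) (Additive M))) :
    cocyclePairing f = 1 := by
  ext a b
  rw [cocyclePairing_apply,
    cocycles₂_trivial_swap_of_mem_coboundaries₂ hf (Prod.commute_mk_one_one_mk a b), sub_self]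
  rfl

theorem cocyclePairing_comap_fst (f : cocycles₂ (Rep.trivial ℤ K₁ (Additive M))) :
    cocyclePairing (cocycles₂Comap (MonoidHom.fst K₁ K₂) f) = 1 := by
  ext a b
  rw [cocyclePairing_apply, cocycles₂Comap_apply, cocycles₂Comap_apply]
  simp only [MonoidHom.coe_fst, cocycles₂_trivial_apply_one_right, sub_self]
  rfl

theorem cocyclePairing_comap_snd (f : cocycles₂ (Rep.trivial ℤ K₂ (Additive M))) :
    cocyclePairing (cocycles₂Comap (MonoidHom.snd K₁ K₂) f) = 1 := by
  ext a b
  rw [cocyclePairing_apply, cocycles₂Comap_apply, cocycles₂Comap_apply]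
  simp only [MonoidHom.coe_snd, cocycles₂_trivial_apply_one_right, sub_self]
  rfl

def bilinCocycle (β : K₁ →* K₂ →* M) :
    cocycles₂ (Rep.trivial ℤ (K₁ × K₂) (Additive M)) :=
  ⟨fun gh => Additive.ofMul (α := M) (β gh.2.1 gh.1.2)⁻¹,
    (mem_cocycles₂_trivial_iff _).2 fun g h j => by
      simp only [Prod.fst_mul, Prod.snd_mul, map_mul, MonoidHom.mul_apply, mul_inv, ofMul_mul]
      abel⟩

theorem bilinCocycle_apply (β : K₁ →* K₂ →* M) (g h : K₁ × K₂) :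
    bilinCocycle β (g, h) = Additive.ofMul (α := M) (β h.1 g.2)⁻¹ := rfl

theorem bilinCocycle_mul (β γ : K₁ →* K₂ →* M) :
    bilinCocycle (β * γ) = bilinCocycle β + bilinCocycle γ := by
  refine cocycles₂_ext fun g h => ?_
  change _ = bilinCocycle β (g, h) + bilinCocycle γ (g, h)
  rw [bilinCocycle_apply, bilinCocycle_apply, bilinCocycle_apply, MonoidHom.mul_apply,
    MonoidHom.mul_apply, mul_inv]
  rfl

theorem cocyclePairing_bilinCocycle (β : K₁ →* K₂ →* M) :
    cocyclePairing (bilinCocycle β) = β := by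
  ext a b
  rw [cocyclePairing_apply, bilinCocycle_apply, bilinCocycle_apply]
  simp

theorem cocycles₂Comap_inl_bilinCocycle (β : K₁ →* K₂ →* M) :
    cocycles₂Comap (MonoidHom.inl K₁ K₂) (bilinCocycle β) = 0 := by
  refine cocycles₂_ext fun g h => ?_
  rw [cocycles₂Comap_apply, bilinCocycle_apply]
  simp only [MonoidHom.inl_apply, map_one, inv_one, ofMul_one]
  rfl

theorem cocycles₂Comap_inr_bilinCocycle (β : K₁ →* K₂ →* M) :
    cocycles₂Comap (MonoidHom.inr K₁ K₂) (bilinCocycle β) = 0 := by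
  refine cocycles₂_ext fun g h => ?_
  rw [cocycles₂Comap_apply, bilinCocycle_apply]
  simp only [MonoidHom.inr_apply, map_one, MonoidHom.one_apply, inv_one, ofMul_one]
  rfl

variable (K₁ K₂ M)

noncomputable def H2Pairing :
    H2 (Rep.trivial ℤ (K₁ × K₂) (Additive M)) →+ Additive (K₁ →* K₂ →* M) :=
  H2Lift
    (AddMonoidHom.mk' (fun f => .ofMul (cocyclePairing f)) fun f g => by
      rw [cocyclePairing_add, ofMul_mul])
    fun _ hf => congrArg Additive.ofMul (cocyclePairing_eq_one_of_mem_coboundaries₂ hf)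

noncomputable def H2OfPairing :
    Additive (K₁ →* K₂ →* M) →+ H2 (Rep.trivial ℤ (K₁ × K₂) (Additive M)) :=
  AddMonoidHom.mk' (fun β => H2π _ (bilinCocycle β.toMul)) fun β γ => by
    rw [toMul_add, bilinCocycle_mul, map_add]

variable {K₁ K₂ M}

theorem H2Pairing_H2π (f : cocycles₂ (Rep.trivial ℤ (K₁ × K₂) (Additive M))) :
    H2Pairing K₁ K₂ M (H2π _ f) = .ofMul (cocyclePairing f) :=
  H2Lift_H2π _ _ f

theorem H2OfPairing_ofMul (β : K₁ →* K₂ →* M) :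
    H2OfPairing K₁ K₂ M (.ofMul β) =
      H2π (Rep.trivial ℤ (K₁ × K₂) (Additive M)) (bilinCocycle β) :=
  rfl

end Pairing

section Decomposition

variable {K₁ K₂ M : Type} [Group K₁] [Group K₂] [CommGroup M]

theorem H2_eq_inflation_add_H2OfPairing (x : H2 (Rep.trivial ℤ (K₁ × K₂) (Additive M))) :
    H2TrivialMap _ (MonoidHom.fst K₁ K₂) (H2TrivialMap _ (MonoidHom.inl K₁ K₂) x) +
      H2TrivialMap _ (MonoidHom.snd K₁ K₂) (H2TrivialMap _ (MonoidHom.inr K₁ K₂) x) +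
      H2OfPairing K₁ K₂ M (H2Pairing K₁ K₂ M x) = x := by
  induction x using H2_induction_on with
  | h f =>
    rw [H2TrivialMap_H2π, H2TrivialMap_H2π, H2TrivialMap_H2π, H2TrivialMap_H2π, H2Pairing_H2π,
      H2OfPairing_ofMul, ← map_add, ← map_add, H2π_eq_iff]
    refine ⟨fun g => f ((g.1, 1), (1, g.2)), funext fun ⟨⟨a, b⟩, ⟨a', b'⟩⟩ => ?_⟩
    rw [Pi.sub_apply, cocycles₂_coe_add, cocycles₂_coe_add]
    simp only [d₁₂_hom_apply, Representation.trivial_apply, Pi.add_apply,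
      cocycles₂Comap_apply, bilinCocycle_apply, cocyclePairing_apply, MonoidHom.coe_fst,
      MonoidHom.coe_snd, MonoidHom.inl_apply, MonoidHom.inr_apply, Prod.fst_mul, Prod.snd_mul,
      ofMul_inv, ofMul_toMul]
    linear_combination (norm := abel) cocycles₂_trivial_prod_decomposition f a a' b b'

theorem H2Pairing_H2TrivialMap_fst (x : H2 (Rep.trivial ℤ K₁ (Additive M))) :
    H2Pairing K₁ K₂ M (H2TrivialMap _ (MonoidHom.fst K₁ K₂) x) = 0 := by
  induction x using H2_induction_on with
  | h f => rw [H2TrivialMap_H2π, H2Pairing_H2π, cocyclePairing_comap_fst]; rfl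

theorem H2Pairing_H2TrivialMap_snd (x : H2 (Rep.trivial ℤ K₂ (Additive M))) :
    H2Pairing K₁ K₂ M (H2TrivialMap _ (MonoidHom.snd K₁ K₂) x) = 0 := by
  induction x using H2_induction_on with
  | h f => rw [H2TrivialMap_H2π, H2Pairing_H2π, cocyclePairing_comap_snd]; rfl

theorem H2Pairing_H2OfPairing (β : Additive (K₁ →* K₂ →* M)) :
    H2Pairing K₁ K₂ M (H2OfPairing K₁ K₂ M β) = β := by
  rw [← ofMul_toMul β, H2OfPairing_ofMul, H2Pairing_H2π, cocyclePairing_bilinCocycle]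

theorem H2TrivialMap_inl_H2OfPairing (β : Additive (K₁ →* K₂ →* M)) :
    H2TrivialMap _ (MonoidHom.inl K₁ K₂) (H2OfPairing K₁ K₂ M β) = 0 := by
  rw [← ofMul_toMul β, H2OfPairing_ofMul, H2TrivialMap_H2π, cocycles₂Comap_inl_bilinCocycle,
    map_zero]

theorem H2TrivialMap_inr_H2OfPairing (β : Additive (K₁ →* K₂ →* M)) :
    H2TrivialMap _ (MonoidHom.inr K₁ K₂) (H2OfPairing K₁ K₂ M β) = 0 := by
  rw [← ofMul_toMul β, H2OfPairing_ofMul, H2TrivialMap_H2π, cocycles₂Comap_inr_bilinCocycle,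
    map_zero]

theorem H2TrivialMap_inl_fst (x : H2 (Rep.trivial ℤ K₁ (Additive M))) :
    H2TrivialMap _ (MonoidHom.inl K₁ K₂) (H2TrivialMap _ (MonoidHom.fst K₁ K₂) x) = x := by
  rw [H2TrivialMap_comp, MonoidHom.fst_comp_inl, H2TrivialMap_id]

theorem H2TrivialMap_inr_fst (x : H2 (Rep.trivial ℤ K₁ (Additive M))) :
    H2TrivialMap _ (MonoidHom.inr K₁ K₂) (H2TrivialMap _ (MonoidHom.fst K₁ K₂) x) = 0 := by
  rw [H2TrivialMap_comp, MonoidHom.fst_comp_inr, H2TrivialMap_one]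

theorem H2TrivialMap_inl_snd (x : H2 (Rep.trivial ℤ K₂ (Additive M))) :
    H2TrivialMap _ (MonoidHom.inl K₁ K₂) (H2TrivialMap _ (MonoidHom.snd K₁ K₂) x) = 0 := by
  rw [H2TrivialMap_comp, MonoidHom.snd_comp_inl, H2TrivialMap_one]

theorem H2TrivialMap_inr_snd (x : H2 (Rep.trivial ℤ K₂ (Additive M))) :
    H2TrivialMap _ (MonoidHom.inr K₁ K₂) (H2TrivialMap _ (MonoidHom.snd K₁ K₂) x) = x := by
  rw [H2TrivialMap_comp, MonoidHom.snd_comp_inr, H2TrivialMap_id]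

variable (K₁ K₂ M) in
noncomputable def H2TrivialProdEquiv :
    H2 (Rep.trivial ℤ (K₁ × K₂) (Additive M)) ≃+
      H2 (Rep.trivial ℤ K₁ (Additive M)) × H2 (Rep.trivial ℤ K₂ (Additive M)) ×
        Additive (K₁ →* K₂ →* M) :=
  AddMonoidHom.toAddEquiv
    ((H2TrivialMap _ (MonoidHom.inl K₁ K₂)).prod
      ((H2TrivialMap _ (MonoidHom.inr K₁ K₂)).prod (H2Pairing K₁ K₂ M)))
    ((H2TrivialMap _ (MonoidHom.fst K₁ K₂)).coprod
      ((H2TrivialMap _ (MonoidHom.snd K₁ K₂)).coprod (H2OfPairing K₁ K₂ M)))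
    (AddMonoidHom.ext fun x => by
      simpa [add_assoc] using H2_eq_inflation_add_H2OfPairing x)
    (AddMonoidHom.ext fun ⟨x, y, β⟩ => by
      simp [H2Pairing_H2TrivialMap_fst, H2Pairing_H2TrivialMap_snd, H2Pairing_H2OfPairing,
        H2TrivialMap_inl_H2OfPairing, H2TrivialMap_inr_H2OfPairing, H2TrivialMap_inl_fst,
        H2TrivialMap_inr_fst, H2TrivialMap_inl_snd, H2TrivialMap_inr_snd])

end Decomposition

end groupCohomology

theorem schurMultiplier_prod_general (K₁ K₂ : Type) [CommGroup K₁] [CommGroup K₂]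
    [Finite K₂] :
    Nonempty (SchurMultiplier (K₁ × K₂) ≃+
      SchurMultiplier K₁ × SchurMultiplier K₂ × Additive (K₁ →* K₂)) := by
  have : NeZero (Monoid.exponent K₂ : ℂ) :=
    ⟨Nat.cast_ne_zero.2 Monoid.exponent_ne_zero_of_finite⟩
  obtain ⟨e⟩ := CommGroup.monoidHom_mulEquiv_of_hasEnoughRootsOfUnity K₂ ℂ
  exact ⟨(groupCohomology.H2TrivialProdEquiv K₁ K₂ ℂˣ).trans
    ((AddEquiv.refl _).prodCongr ((AddEquiv.refl _).prodCongr
      (MulEquiv.monoidHomCongrRight e).toAdditive))⟩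

theorem schurMultiplier_prod (K₁ K₂ : Type) [CommGroup K₁] [CommGroup K₂]
    [Finite K₁] [Finite K₂] :
    Nonempty (SchurMultiplier (K₁ × K₂) ≃+
      SchurMultiplier K₁ × SchurMultiplier K₂ × Additive (K₁ →* K₂)) :=
  schurMultiplier_prod_general K₁ K₂
end
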